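/- Let λ > 0. Define P_{t,1}^λ(x,y) = (2λ(xy)^λ t/π) ∫_0^{π/2} (sin θ)^{2λ−1} / [(x−y)² + t² + 2xy(1−cos θ)]^{λ+1} dθ. There exists C > 0 such that for all x, y, t ∈ (0,∞) with x ≠ y, |P_{t,1}^λ(x,y) − P_t(x−y)| ≤ C (t/(xy)) (1 + log(1 + xy/(x−y)²)), where P_t(u) = (1/π) t/(t²+u²) is the classical Poisson kernel. -/

import Mathlib

open MeasureTheory Set

/-- The classical one-dimensional Poisson kernel. -/
noncomputable def classicalPoissonKernel (t u : ℝ) : ℝ := (1 / Real.pi) * (t / (t ^ 2 + u ^ 2))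

/-- The near part `P_{t,1}^λ(x,y)` of the Bessel Poisson kernel. -/
noncomputable def besselPoissonKernelNear (l t x y : ℝ) : ℝ :=
  (2 * l * (x * y) ^ l * t / Real.pi) *
    ∫ θ in Ioo (0 : ℝ) (Real.pi / 2),
      Real.sin θ ^ (2 * l - 1) /
        ((x - y) ^ 2 + t ^ 2 + 2 * x * y * (1 - Real.cos θ)) ^ (l + 1)

lemma aux_exp_abs (x : ℝ) : |Real.exp x - 1| ≤ |x| * Real.exp |x| := by
  rcases le_or_gt 0 x with h | h
  · rw [abs_of_nonneg h, abs_of_nonneg (by linarith [Real.one_le_exp h] : (0:ℝ) ≤ Real.exp x - 1)]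
    have h2 : -x + 1 ≤ (Real.exp x)⁻¹ := by rw [← Real.exp_neg]; exact Real.add_one_le_exp _
    have h1 : (1 - x) * Real.exp x ≤ 1 := by
      calc (1 - x) * Real.exp x ≤ (Real.exp x)⁻¹ * Real.exp x :=
            mul_le_mul_of_nonneg_right (by linarith) (Real.exp_pos x).le
        _ = 1 := inv_mul_cancel₀ (Real.exp_pos x).ne'
    nlinarith
  · rw [abs_of_neg h, abs_of_nonpos (by linarith [Real.exp_lt_one_iff.mpr h] : Real.exp x - 1 ≤ 0)]
    nlinarith [Real.add_one_le_exp x, Real.exp_pos (-x), Real.one_le_exp (neg_nonneg.mpr h.le)]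

lemma aux_neg_log_le {v : ℝ} (hv : 0 < v) : -Real.log v ≤ (1 - v) / v := by
  have := Real.log_le_sub_one_of_pos (inv_pos.mpr hv)
  rw [Real.log_inv] at this
  rw [sub_div, div_self hv.ne', one_div]
  linarith [this]

lemma aux_one_sub_rpow {l r : ℝ} (hl : 0 < l) (hr0 : 0 < r) (hr1 : r ≤ 1) :
    1 - r ^ l ≤ l * ((1 - r) / r) := by
  have h1 : l * Real.log r + 1 ≤ Real.exp (l * Real.log r) := Real.add_one_le_exp _
  have h2 : r ^ l = Real.exp (l * Real.log r) := by
    rw [Real.rpow_def_of_pos hr0, mul_comm]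
  have h3 : -Real.log r ≤ (1 - r) / r := aux_neg_log_le hr0
  nlinarith [hl.le]

lemma aux_w_bound (l : ℝ) {u : ℝ} (hu0 : 0 ≤ u) (hu1 : u ≤ 1) :
    |((2 - u) / 2) ^ (l - 1) - 1| ≤ (|l - 1| * Real.exp |l - 1|) * u := by
  set v : ℝ := (2 - u) / 2 with hv
  have hv0 : 0 < v := by rw [hv]; linarith
  have hv1 : v ≤ 1 := by rw [hv]; linarith
  have hlog : -Real.log v ≤ u := by
    have h1 := aux_neg_log_le hv0
    have h2 : (1 - v) / v ≤ 2 * (1 - v) := by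
      rw [div_le_iff₀ hv0]
      nlinarith
    have : 2 * (1 - v) = u := by rw [hv]; ring
    linarith
  have hlogn : Real.log v ≤ 0 := Real.log_nonpos hv0.le hv1
  have habs : |Real.log v| ≤ u := by rw [abs_of_nonpos hlogn]; linarith
  have h2 : v ^ (l - 1) = Real.exp ((l - 1) * Real.log v) := by
    rw [Real.rpow_def_of_pos hv0, mul_comm]
  rw [h2]
  calc |Real.exp ((l - 1) * Real.log v) - 1|
      ≤ |(l - 1) * Real.log v| * Real.exp |(l - 1) * Real.log v| := aux_exp_abs _
    _ ≤ (|l - 1| * Real.exp |l - 1|) * u := by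
        rw [abs_mul]
        have h3 : |l - 1| * |Real.log v| ≤ |l - 1| * u :=
          mul_le_mul_of_nonneg_left habs (abs_nonneg _)
        have h4 : Real.exp (|l - 1| * |Real.log v|) ≤ Real.exp |l - 1| := by
          apply Real.exp_le_exp.mpr
          calc |l - 1| * |Real.log v| ≤ |l - 1| * 1 :=
                mul_le_mul_of_nonneg_left (habs.trans hu1) (abs_nonneg _)
            _ = |l - 1| := mul_one _
        calc |l - 1| * |Real.log v| * Real.exp (|l - 1| * |Real.log v|)
            ≤ (|l - 1| * u) * Real.exp (|l - 1| * |Real.log v|) :=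
              mul_le_mul_of_nonneg_right h3 (Real.exp_pos _).le
          _ ≤ (|l - 1| * u) * Real.exp |l - 1| :=
              mul_le_mul_of_nonneg_left h4 (by positivity)
          _ = |l - 1| * Real.exp |l - 1| * u := by ring

lemma ftc_log {D a : ℝ} (hD : 0 < D) (ha : 0 < a) :
    ∫ u in (0:ℝ)..1, (D + a * u)⁻¹ = a⁻¹ * (Real.log (D + a) - Real.log D) := by
  have hpos : ∀ u : ℝ, u ∈ uIcc (0:ℝ) 1 → 0 < D + a * u := by
    intro u hu
    rw [uIcc_of_le zero_le_one] at hu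
    nlinarith [hu.1, hu.2]
  have hderiv : ∀ u ∈ uIcc (0:ℝ) 1,
      HasDerivAt (fun u => a⁻¹ * Real.log (D + a * u)) ((D + a * u)⁻¹) u := by
    intro u hu
    have h1 : HasDerivAt (fun u : ℝ => D + a * u) a u := by
      simpa using ((hasDerivAt_id u).const_mul a).const_add D
    have h2 := (h1.log (hpos u hu).ne').const_mul a⁻¹
    refine h2.congr_deriv ?_
    rw [← mul_div_assoc, inv_mul_cancel₀ ha.ne', one_div]
  have hint : IntervalIntegrable (fun u : ℝ => (D + a * u)⁻¹) volume 0 1 := by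
    apply ContinuousOn.intervalIntegrable
    exact (ContinuousOn.add continuousOn_const (continuousOn_const.mul (continuousOn_id))).inv₀
      (fun u hu => (hpos u hu).ne')
  have := intervalIntegral.integral_eq_sub_of_hasDerivAt hderiv hint
  rw [this]
  rw [mul_zero, add_zero, mul_one]
  ring

lemma ftc_main {l D a : ℝ} (hl : 0 < l) (hD : 0 < D) (ha : 0 < a) :
    ∫ u in (0:ℝ)..1, l * a ^ l * (u ^ (l - 1) / (D + a * u) ^ (l + 1))
      = D⁻¹ * (a / (D + a)) ^ l := by
  set F : ℝ → ℝ := fun u => D⁻¹ * ((a * u) ^ l * (((D + a * u) ^ l)⁻¹)) with hF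
  have hpos : ∀ u : ℝ, 0 ≤ u → 0 < D + a * u := fun u hu => by nlinarith
  have hcont : ContinuousOn F (Icc 0 1) := by
    apply ContinuousOn.mul continuousOn_const
    apply ContinuousOn.mul
    · apply ContinuousOn.rpow_const (continuousOn_const.mul continuousOn_id)
      exact fun u hu => Or.inr hl.le
    · apply ContinuousOn.inv₀
      · apply ContinuousOn.rpow_const
          (continuousOn_const.add (continuousOn_const.mul continuousOn_id))
        exact fun u hu => Or.inl (hpos u hu.1).ne'
      · intro u hu
        exact (Real.rpow_pos_of_pos (hpos u hu.1) l).ne'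
  have hderiv : ∀ u ∈ Ioo (0:ℝ) 1,
      HasDerivWithinAt F (l * a ^ l * (u ^ (l - 1) / (D + a * u) ^ (l + 1))) (Ioi u) u := by
    intro u hu
    have hu0 : 0 < u := hu.1
    have hau : 0 < a * u := mul_pos ha hu0
    have hB : 0 < D + a * u := hpos u hu0.le
    have h1 : HasDerivAt (fun u : ℝ => a * u) a u := by
      simpa using ((hasDerivAt_id u).const_mul a)
    have h2 : HasDerivAt (fun u : ℝ => (a * u) ^ l) (a * l * (a * u) ^ (l - 1)) u :=
      h1.rpow_const (Or.inl hau.ne')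
    have h3 : HasDerivAt (fun u : ℝ => D + a * u) a u := by simpa using h1.const_add D
    have h4 : HasDerivAt (fun u : ℝ => (D + a * u) ^ l) (a * l * (D + a * u) ^ (l - 1)) u :=
      h3.rpow_const (Or.inl hB.ne')
    have h5 := h4.inv (Real.rpow_pos_of_pos hB l).ne'
    have h6 := ((h2.mul h5).const_mul D⁻¹)
    apply HasDerivAt.hasDerivWithinAt
    refine h6.congr_deriv ?_
    symm
    have key : ∀ P Q B : ℝ, 0 < P → 0 < Q → 0 < B →
        (a * u) ^ (l - 1) = P → B = D + a * u → B ^ (l - 1) = Q →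
        (a * u) ^ l = P * (a * u) → B ^ l = Q * B → B ^ (l + 1) = Q * B ^ 2 →
        a ^ l * u ^ (l - 1) = P * a →
        l * a ^ l * (u ^ (l - 1) / B ^ (l + 1))
          = D⁻¹ * (a * l * (a * u) ^ (l - 1) * (B ^ l)⁻¹
              + (a * u) ^ l * (-(a * l * B ^ (l - 1)) / (B ^ l) ^ 2)) := by
      intro P Q B hP hQ hBp eP eB0 eQ e1 e2 e3 e4
      rw [eP, eQ, e1, e2, e3]
      rw [show l * a ^ l * (u ^ (l - 1) / (Q * B ^ 2)) = l * (a ^ l * u ^ (l - 1)) / (Q * B ^ 2)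
        by ring, e4]
      rw [show a * u = B - D by rw [eB0]; ring]
      field_simp
      ring
    exact key ((a * u) ^ (l - 1)) ((D + a * u) ^ (l - 1)) (D + a * u)
      (Real.rpow_pos_of_pos hau _) (Real.rpow_pos_of_pos hB _) hB rfl rfl rfl
      (by rw [← Real.rpow_add_one hau.ne']; ring_nf)
      (by rw [← Real.rpow_add_one hB.ne']; ring_nf)
      (by rw [← Real.rpow_natCast (D + a * u) 2, ← Real.rpow_add hB]; ring_nf)
      (by rw [Real.mul_rpow ha.le hu0.le,
              show a ^ l = a ^ (l - 1) * a from by rw [← Real.rpow_add_one ha.ne']; ring_nf]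
          ring)
  have hcont2 : ContinuousOn (fun u : ℝ => ((D + a * u) ^ (l + 1))⁻¹) (uIcc (0:ℝ) 1) := by
    rw [uIcc_of_le zero_le_one]
    apply ContinuousOn.inv₀
    · apply ContinuousOn.rpow_const
        (continuousOn_const.add (continuousOn_const.mul continuousOn_id))
      exact fun u hu => Or.inl (hpos u hu.1).ne'
    · intro u hu
      exact (Real.rpow_pos_of_pos (hpos u hu.1) (l + 1)).ne'
  have hbase : IntervalIntegrable (fun u : ℝ => u ^ (l - 1)) volume 0 1 :=
    intervalIntegral.intervalIntegrable_rpow' (by linarith)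
  have hint : IntervalIntegrable
      (fun u : ℝ => l * a ^ l * (u ^ (l - 1) / (D + a * u) ^ (l + 1))) volume 0 1 := by
    have h := (hbase.mul_continuousOn hcont2).const_mul (l * a ^ l)
    simpa [div_eq_mul_inv, mul_assoc] using h
  have hres := intervalIntegral.integral_eq_sub_of_hasDeriv_right_of_le zero_le_one hcont
    hderiv hint
  rw [hres, hF]
  simp only [mul_zero, add_zero, mul_one]
  rw [Real.zero_rpow hl.ne', Real.div_rpow ha.le (by linarith : (0:ℝ) ≤ D + a)]
  field_simp
  ring

lemma subst_lemma (l : ℝ) {D a : ℝ} (hD : 0 < D) (ha : 0 < a) :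
    ∫ θ in Ioo (0:ℝ) (Real.pi / 2),
        Real.sin θ ^ (2 * l - 1) / (D + a * (1 - Real.cos θ)) ^ (l + 1)
      = ∫ u in Ioo (0:ℝ) 1, (u * (2 - u)) ^ (l - 1) / (D + a * u) ^ (l + 1) := by
  have hpi := Real.pi_pos
  set f : ℝ → ℝ := fun θ => 1 - Real.cos θ with hf
  have hder : ∀ θ ∈ Ioo (0:ℝ) (Real.pi / 2),
      HasDerivWithinAt f (Real.sin θ) (Ioo (0:ℝ) (Real.pi / 2)) θ := by
    intro θ _
    have := (Real.hasDerivAt_cos θ).const_sub 1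
    simpa using this.hasDerivWithinAt
  have hinj : InjOn f (Ioo (0:ℝ) (Real.pi / 2)) := by
    intro θ1 h1 θ2 h2 h
    have hc : Real.cos θ1 = Real.cos θ2 := by
      simp only [hf] at h; linarith
    exact Real.injOn_cos ⟨h1.1.le, by linarith [h1.2]⟩ ⟨h2.1.le, by linarith [h2.2]⟩ hc
  have himg : f '' Ioo (0:ℝ) (Real.pi / 2) = Ioo (0:ℝ) 1 := by
    ext u
    constructor
    · rintro ⟨θ, hθ, rfl⟩
      have hc0 : 0 < Real.cos θ := Real.cos_pos_of_mem_Ioo ⟨by linarith [hθ.1], hθ.2⟩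
      have hsθ : 0 < Real.sin θ := Real.sin_pos_of_pos_of_lt_pi hθ.1 (by linarith [hθ.2])
      have hc1 : Real.cos θ < 1 := by nlinarith [Real.sin_sq_add_cos_sq θ]
      exact ⟨by simp [hf]; linarith, by simp [hf]; linarith⟩
    · intro hu
      refine ⟨Real.arccos (1 - u), ⟨?_, ?_⟩, ?_⟩
      · exact Real.arccos_pos.mpr (by linarith [hu.1])
      · exact Real.arccos_lt_pi_div_two.mpr (by linarith [hu.2])
      · simp only [hf]
        rw [Real.cos_arccos (by linarith [hu.2]) (by linarith [hu.1])]
        ring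
  have hsub := integral_image_eq_integral_abs_deriv_smul measurableSet_Ioo hder hinj
    (fun u => (u * (2 - u)) ^ (l - 1) / (D + a * u) ^ (l + 1))
  rw [himg] at hsub
  rw [hsub]
  apply setIntegral_congr_fun measurableSet_Ioo
  intro θ hθ
  have hs : 0 < Real.sin θ := Real.sin_pos_of_pos_of_lt_pi hθ.1 (by linarith [hθ.2])
  have hbase : f θ * (2 - f θ) = Real.sin θ ^ 2 := by
    simp only [hf]
    linear_combination -Real.sin_sq_add_cos_sq θ
  simp only [smul_eq_mul, abs_of_pos hs]
  rw [hbase]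
  have hpow : Real.sin θ ^ (2 * l - 1) = Real.sin θ * (Real.sin θ ^ 2) ^ (l - 1) := by
    have e : (2:ℝ) * l - 1 = 2 * (l - 1) + 1 := by ring
    rw [e, Real.rpow_add hs, Real.rpow_one, ← Real.rpow_natCast (Real.sin θ) 2,
      ← Real.rpow_mul hs.le]
    push_cast
    ring
  rw [hpow]
  ring
set_option maxHeartbeats 1000000 in
lemma core_bound (l : ℝ) (hl : 0 < l) {D a : ℝ} (hD : 0 < D) (ha : 0 < a) :
    |l * a ^ l * (2:ℝ) ^ (1 - l) *
        (∫ u in (0:ℝ)..1, (u * (2 - u)) ^ (l - 1) / (D + a * u) ^ (l + 1)) - 1 / D|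
      ≤ (l * (|l - 1| * Real.exp |l - 1| + 1) / a) * (1 + Real.log (1 + a / D)) := by
  set K : ℝ := |l - 1| * Real.exp |l - 1| with hK
  have hK0 : 0 ≤ K := by positivity
  have hpos : ∀ u : ℝ, 0 ≤ u → 0 < D + a * u := fun u hu => by nlinarith
  set f1 : ℝ → ℝ := fun u => u ^ (l - 1) * ((2 - u) / 2) ^ (l - 1) / (D + a * u) ^ (l + 1)
    with hf1
  set f2 : ℝ → ℝ := fun u => u ^ (l - 1) / (D + a * u) ^ (l + 1) with hf2
  -- continuity of the denominator-inverse
  have hcB : ContinuousOn (fun u : ℝ => ((D + a * u) ^ (l + 1))⁻¹) (uIcc (0:ℝ) 1) := by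
    rw [uIcc_of_le zero_le_one]
    apply ContinuousOn.inv₀
    · exact ContinuousOn.rpow_const
        (continuousOn_const.add (continuousOn_const.mul continuousOn_id))
        (fun u hu => Or.inl (hpos u hu.1).ne')
    · exact fun u hu => (Real.rpow_pos_of_pos (hpos u hu.1) (l + 1)).ne'
  have hcw : ContinuousOn (fun u : ℝ => ((2 - u) / 2) ^ (l - 1)) (uIcc (0:ℝ) 1) := by
    rw [uIcc_of_le zero_le_one]
    exact ContinuousOn.rpow_const
      ((continuousOn_const.sub continuousOn_id).div_const 2)
      (fun u hu => Or.inl (ne_of_gt (by nlinarith [hu.2] : (0:ℝ) < (2 - u) / 2)))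
  have hbase : IntervalIntegrable (fun u : ℝ => u ^ (l - 1)) volume 0 1 :=
    intervalIntegral.intervalIntegrable_rpow' (by linarith)
  have hif2 : IntervalIntegrable f2 volume 0 1 := by
    have h := hbase.mul_continuousOn hcB
    simpa [hf2, div_eq_mul_inv] using h
  have hif1 : IntervalIntegrable f1 volume 0 1 := by
    have h := hbase.mul_continuousOn (hcw.mul hcB)
    simpa [hf1, div_eq_mul_inv, mul_assoc] using h
  -- Step 1: rewrite the integral
  have step1 : (2:ℝ) ^ (1 - l) *
      (∫ u in (0:ℝ)..1, (u * (2 - u)) ^ (l - 1) / (D + a * u) ^ (l + 1))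
      = ∫ u in (0:ℝ)..1, f1 u := by
    rw [← intervalIntegral.integral_const_mul]
    rw [intervalIntegral.integral_of_le zero_le_one, intervalIntegral.integral_of_le zero_le_one,
      integral_Ioc_eq_integral_Ioo, integral_Ioc_eq_integral_Ioo]
    apply setIntegral_congr_fun measurableSet_Ioo
    intro u hu
    have hu0 : 0 < u := hu.1
    have hu2 : 0 < 2 - u := by linarith [hu.2]
    have h2l : (0:ℝ) < (2:ℝ) ^ (l - 1) := Real.rpow_pos_of_pos two_pos _
    simp only [hf1]
    rw [Real.mul_rpow hu0.le hu2.le, Real.div_rpow hu2.le (by norm_num : (0:ℝ) ≤ 2),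
      show (1:ℝ) - l = -(l - 1) by ring, Real.rpow_neg (by norm_num : (0:ℝ) ≤ 2)]
    field_simp
  -- Step 3: bound on the difference of integrals
  have hdiffb : |(∫ u in (0:ℝ)..1, f1 u) - ∫ u in (0:ℝ)..1, f2 u|
      ≤ K * (a ^ l)⁻¹ * (a⁻¹ * (Real.log (D + a) - Real.log D)) := by
    rw [← intervalIntegral.integral_sub hif1 hif2]
    have hlog : Real.log D ≤ Real.log (D + a) := Real.log_le_log hD (by linarith)
    have hgval : ∫ u in (0:ℝ)..1, K * (a ^ l)⁻¹ * (D + a * u)⁻¹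
        = K * (a ^ l)⁻¹ * (a⁻¹ * (Real.log (D + a) - Real.log D)) := by
      rw [intervalIntegral.integral_const_mul, ftc_log hD ha]
    have hgint : IntervalIntegrable (fun u : ℝ => K * (a ^ l)⁻¹ * (D + a * u)⁻¹) volume 0 1 := by
      apply ContinuousOn.intervalIntegrable
      apply ContinuousOn.mul continuousOn_const
      apply ContinuousOn.inv₀
        (continuousOn_const.add (continuousOn_const.mul continuousOn_id))
      rw [uIcc_of_le zero_le_one]
      exact fun u hu => (hpos u hu.1).ne'
    have hb := intervalIntegral.norm_integral_le_abs_of_norm_le (μ := volume)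
      (f := fun u => f1 u - f2 u) (a := 0) (b := 1)
      (g := fun u => K * (a ^ l)⁻¹ * (D + a * u)⁻¹) ?_ hgint
    · rw [hgval] at hb
      rw [abs_of_nonneg (mul_nonneg (by positivity)
        (mul_nonneg (by positivity) (by linarith)))] at hb
      exact hb
    · rw [uIoc_of_le zero_le_one]
      refine (ae_restrict_iff' measurableSet_Ioc).mpr (Filter.Eventually.of_forall ?_)
      intro u hu
      have hu0 : 0 < u := hu.1
      have hB : 0 < D + a * u := hpos u hu0.le
      have hBl : 0 < (D + a * u) ^ (l + 1) := Real.rpow_pos_of_pos hB _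
      have e1 : f1 u - f2 u = u ^ (l - 1) * (((2 - u) / 2) ^ (l - 1) - 1) / (D + a * u) ^ (l + 1) := by
        simp only [hf1, hf2]; ring
      show |f1 u - f2 u| ≤ K * (a ^ l)⁻¹ * (D + a * u)⁻¹
      rw [e1, abs_div, abs_mul, abs_of_pos (Real.rpow_pos_of_pos hu0 _),
        abs_of_pos hBl]
      have hw := aux_w_bound l hu0.le hu.2
      have h2 : u ^ (l - 1) * |((2 - u) / 2) ^ (l - 1) - 1| ≤ K * u ^ l := by
        calc u ^ (l - 1) * |((2 - u) / 2) ^ (l - 1) - 1| ≤ u ^ (l - 1) * (K * u) :=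
              mul_le_mul_of_nonneg_left hw (Real.rpow_pos_of_pos hu0 _).le
          _ = K * (u ^ (l - 1) * u) := by ring
          _ = K * u ^ l := by rw [← Real.rpow_add_one hu0.ne']; ring_nf
      have h3 : u ^ l / (D + a * u) ^ (l + 1) ≤ (a ^ l)⁻¹ * (D + a * u)⁻¹ := by
        have hBe : (D + a * u) ^ (l + 1) = (D + a * u) ^ l * (D + a * u) := by
          rw [← Real.rpow_add_one hB.ne']
        have hmono : (a * u) ^ l ≤ (D + a * u) ^ l :=
          Real.rpow_le_rpow (by positivity) (by linarith) hl.le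
        rw [Real.mul_rpow ha.le hu0.le] at hmono
        have hul : 0 < u ^ l := Real.rpow_pos_of_pos hu0 _
        have hal : 0 < a ^ l := Real.rpow_pos_of_pos ha _
        rw [hBe, div_le_iff₀ (by positivity)]
        rw [show (a ^ l)⁻¹ * (D + a * u)⁻¹ * ((D + a * u) ^ l * (D + a * u))
            = (a ^ l)⁻¹ * (D + a * u) ^ l * ((D + a * u)⁻¹ * (D + a * u)) by ring,
          inv_mul_cancel₀ hB.ne', mul_one]
        calc u ^ l = (a ^ l)⁻¹ * (a ^ l * u ^ l) := by field_simp
          _ ≤ (a ^ l)⁻¹ * (D + a * u) ^ l := by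
              exact mul_le_mul_of_nonneg_left hmono (by positivity)
      calc u ^ (l - 1) * |((2 - u) / 2) ^ (l - 1) - 1| / (D + a * u) ^ (l + 1)
          ≤ K * u ^ l / (D + a * u) ^ (l + 1) := by
            rw [div_le_div_iff₀ hBl hBl]
            nlinarith [h2, hBl]
        _ = K * (u ^ l / (D + a * u) ^ (l + 1)) := by ring
        _ ≤ K * ((a ^ l)⁻¹ * (D + a * u)⁻¹) := mul_le_mul_of_nonneg_left h3 hK0
        _ = K * (a ^ l)⁻¹ * (D + a * u)⁻¹ := by ring
  -- Step 4: exact value of the model integral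
  have hmodel : l * a ^ l * (∫ u in (0:ℝ)..1, f2 u) = D⁻¹ * (a / (D + a)) ^ l := by
    rw [← ftc_main hl hD ha, ← intervalIntegral.integral_const_mul]
  -- Step 5: assemble
  have hr0 : 0 < a / (D + a) := by positivity
  have hr1 : a / (D + a) ≤ 1 := by rw [div_le_one (by linarith)]; linarith
  have hsecond : |D⁻¹ * (a / (D + a)) ^ l - 1 / D| ≤ l / a := by
    have h1 : (a / (D + a)) ^ l ≤ 1 := by
      calc (a / (D + a)) ^ l ≤ 1 ^ l := Real.rpow_le_rpow hr0.le hr1 hl.le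
        _ = 1 := Real.one_rpow l
    have h2 := aux_one_sub_rpow hl hr0 hr1
    have h3 : (1 - a / (D + a)) / (a / (D + a)) = D / a := by
      field_simp
      ring
    rw [h3] at h2
    have h4 : 0 < (a / (D + a)) ^ l := Real.rpow_pos_of_pos hr0 _
    rw [abs_of_nonpos (by rw [one_div]; nlinarith [inv_pos.mpr hD])]
    have : D⁻¹ * (1 - (a / (D + a)) ^ l) ≤ D⁻¹ * (l * (D / a)) :=
      mul_le_mul_of_nonneg_left h2 (inv_pos.mpr hD).le
    have e : D⁻¹ * (l * (D / a)) = l / a := by field_simp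
    rw [one_div]
    nlinarith [this]
  have hloge : Real.log (D + a) - Real.log D = Real.log (1 + a / D) := by
    rw [← Real.log_div (by linarith) hD.ne']
    congr 1
    field_simp
  have hlognn : 0 ≤ Real.log (1 + a / D) := Real.log_nonneg (by nlinarith [div_pos ha hD])
  have hE : l * a ^ l * (2:ℝ) ^ (1 - l) *
      (∫ u in (0:ℝ)..1, (u * (2 - u)) ^ (l - 1) / (D + a * u) ^ (l + 1)) - 1 / D
      = l * a ^ l * ((∫ u in (0:ℝ)..1, f1 u) - ∫ u in (0:ℝ)..1, f2 u)
        + (D⁻¹ * (a / (D + a)) ^ l - 1 / D) := by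
    rw [← hmodel, show l * a ^ l * (2:ℝ) ^ (1 - l) *
      (∫ u in (0:ℝ)..1, (u * (2 - u)) ^ (l - 1) / (D + a * u) ^ (l + 1))
      = l * a ^ l * ((2:ℝ) ^ (1 - l) *
        (∫ u in (0:ℝ)..1, (u * (2 - u)) ^ (l - 1) / (D + a * u) ^ (l + 1))) by ring, step1]
    ring
  rw [hE]
  have hal : 0 < a ^ l := Real.rpow_pos_of_pos ha _
  calc |l * a ^ l * ((∫ u in (0:ℝ)..1, f1 u) - ∫ u in (0:ℝ)..1, f2 u)
        + (D⁻¹ * (a / (D + a)) ^ l - 1 / D)|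
      ≤ |l * a ^ l * ((∫ u in (0:ℝ)..1, f1 u) - ∫ u in (0:ℝ)..1, f2 u)|
        + |D⁻¹ * (a / (D + a)) ^ l - 1 / D| := abs_add_le _ _
    _ ≤ l * a ^ l * (K * (a ^ l)⁻¹ * (a⁻¹ * (Real.log (D + a) - Real.log D))) + l / a := by
        apply add_le_add _ hsecond
        rw [abs_mul, abs_of_pos (by positivity : (0:ℝ) < l * a ^ l)]
        exact mul_le_mul_of_nonneg_left hdiffb (by positivity)
    _ = l * K * a⁻¹ * Real.log (1 + a / D) + l / a := by
        rw [hloge]; field_simp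
    _ ≤ (l * (K + 1) / a) * (1 + Real.log (1 + a / D)) := by
        have key : l * K * a⁻¹ * Real.log (1 + a / D) + l / a
            = (l * K * Real.log (1 + a / D) + l) / a := by field_simp
        rw [key, div_mul_eq_mul_div, div_le_div_iff₀ ha ha]
        have hnum : l * K * Real.log (1 + a / D) + l
            ≤ l * (K + 1) * (1 + Real.log (1 + a / D)) := by
          nlinarith [hl.le, hlognn, mul_nonneg hK0 hlognn, mul_nonneg hl.le hlognn]
        nlinarith [mul_le_mul_of_nonneg_right hnum ha.le]

set_option maxHeartbeats 1000000 in
theorem bessel_poisson_near_minus_classical_bound (l : ℝ) (hl : 0 < l) :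
    ∃ C : ℝ, 0 < C ∧ ∀ x y t : ℝ, 0 < x → 0 < y → 0 < t → x ≠ y →
      |besselPoissonKernelNear l t x y - classicalPoissonKernel t (x - y)|
        ≤ C * (t / (x * y)) * (1 + Real.log (1 + x * y / (x - y) ^ 2)) := by
  have hK0 : (0:ℝ) ≤ |l - 1| * Real.exp |l - 1| := by positivity
  refine ⟨l * (|l - 1| * Real.exp |l - 1| + 1), by positivity, ?_⟩
  intro x y t hx hy ht hxy
  have hD0 : (0:ℝ) < (x - y) ^ 2 + t ^ 2 := by positivity
  have ha0 : (0:ℝ) < 2 * x * y := by positivity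
  have hs2 : (0:ℝ) < (x - y) ^ 2 := pow_two_pos_of_ne_zero (sub_ne_zero.mpr hxy)
  have hpi := Real.pi_pos
  have hpi1 : (1:ℝ) ≤ Real.pi := by linarith [Real.pi_gt_three]
  -- rewrite the near kernel using the substitution lemma
  have hnear : besselPoissonKernelNear l t x y
      = t / Real.pi * (l * (2 * x * y) ^ l * (2:ℝ) ^ (1 - l) *
          ∫ u in (0:ℝ)..1,
            (u * (2 - u)) ^ (l - 1) / ((x - y) ^ 2 + t ^ 2 + 2 * x * y * u) ^ (l + 1)) := by
    simp only [besselPoissonKernelNear]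
    rw [subst_lemma l hD0 ha0,
      ← integral_Ioc_eq_integral_Ioo, ← intervalIntegral.integral_of_le zero_le_one]
    rw [show ((2:ℝ) * x * y) = 2 * (x * y) by ring,
      Real.mul_rpow (by norm_num : (0:ℝ) ≤ 2) (by positivity : (0:ℝ) ≤ x * y)]
    rw [show l * ((2:ℝ) ^ l * (x * y) ^ l) * (2:ℝ) ^ (1 - l)
        = l * (x * y) ^ l * ((2:ℝ) ^ l * (2:ℝ) ^ (1 - l)) by ring,
      ← Real.rpow_add two_pos, show l + (1 - l) = (1:ℝ) by ring, Real.rpow_one]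
    ring
  have hpoisson : classicalPoissonKernel t (x - y) = t / Real.pi * (1 / ((x - y) ^ 2 + t ^ 2)) := by
    simp only [classicalPoissonKernel]
    ring
  have hcore := core_bound l hl hD0 ha0
  set K : ℝ := |l - 1| * Real.exp |l - 1| with hK
  set I : ℝ := ∫ u in (0:ℝ)..1,
      (u * (2 - u)) ^ (l - 1) / ((x - y) ^ 2 + t ^ 2 + 2 * x * y * u) ^ (l + 1) with hI
  set L : ℝ := Real.log (1 + x * y / (x - y) ^ 2) with hL
  set M : ℝ := Real.log (1 + 2 * x * y / ((x - y) ^ 2 + t ^ 2)) with hM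
  have hL0 : 0 ≤ L := by
    rw [hL]
    exact Real.log_nonneg (by nlinarith [div_nonneg (mul_pos hx hy).le hs2.le])
  have hM1L : M ≤ 1 + L := by
    have h1 : 2 * x * y / ((x - y) ^ 2 + t ^ 2) ≤ 2 * (x * y / (x - y) ^ 2) := by
      rw [show (2:ℝ) * (x * y / (x - y) ^ 2) = 2 * x * y / (x - y) ^ 2 by ring,
        div_le_div_iff₀ hD0 hs2]
      nlinarith [mul_nonneg ha0.le (sq_nonneg t)]
    have h2 : 1 + 2 * x * y / ((x - y) ^ 2 + t ^ 2) ≤ 2 * (1 + x * y / (x - y) ^ 2) := by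
      have h3 : (0:ℝ) ≤ x * y / (x - y) ^ 2 := div_nonneg (mul_pos hx hy).le hs2.le
      linarith
    rw [hM, hL]
    calc Real.log (1 + 2 * x * y / ((x - y) ^ 2 + t ^ 2))
        ≤ Real.log (2 * (1 + x * y / (x - y) ^ 2)) := Real.log_le_log (by positivity) h2
      _ = Real.log 2 + Real.log (1 + x * y / (x - y) ^ 2) := by
          rw [Real.log_mul two_ne_zero (by positivity)]
      _ ≤ 1 + Real.log (1 + x * y / (x - y) ^ 2) := by linarith [Real.log_two_lt_d9]
  rw [hnear, hpoisson, ← mul_sub, abs_mul, abs_of_pos (div_pos ht hpi)]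
  have hA : (0:ℝ) ≤ l * (K + 1) * t * (x * y) := by positivity
  calc t / Real.pi * |l * (2 * x * y) ^ l * (2:ℝ) ^ (1 - l) * I - 1 / ((x - y) ^ 2 + t ^ 2)|
      ≤ t / Real.pi * (l * (K + 1) / (2 * x * y) * (1 + M)) :=
        mul_le_mul_of_nonneg_left hcore (div_pos ht hpi).le
    _ ≤ l * (K + 1) * (t / (x * y)) * (1 + L) := by
        have e1 : t / Real.pi * (l * (K + 1) / (2 * x * y) * (1 + M))
            = l * (K + 1) * t * (1 + M) / (Real.pi * (2 * x * y)) := by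
          field_simp
        have e2 : l * (K + 1) * (t / (x * y)) * (1 + L) = l * (K + 1) * t * (1 + L) / (x * y) := by
          ring
        rw [e1, e2, div_le_div_iff₀ (by positivity) (by positivity)]
        calc l * (K + 1) * t * (1 + M) * (x * y)
            = (l * (K + 1) * t * (x * y)) * (1 + M) := by ring
          _ ≤ (l * (K + 1) * t * (x * y)) * (2 * Real.pi * (1 + L)) := by
              apply mul_le_mul_of_nonneg_left _ hA
              nlinarith [hpi1, hL0, hM1L]
          _ = l * (K + 1) * t * (1 + L) * (Real.pi * (2 * x * y)) := by ring
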